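/- arXiv:1410.4336 — 2 statements merged into one kernel-verified Lean document; each statement's English description precedes it below -/
import Mathlib

section
/- For n ≥ 2d ≥ 2 the chromatic number of the circular complete graph K_{n/d} equals the ceiling of n/d. -/
/-!
Colouring vertex `v` by `⌊v / d⌋` uses `⌈n/d⌉` colours, and two vertices of the same colour
are at distance less than `d`, so this colouring is proper.

Conversely, an independent set `s` containing `x₀` has all offsets `y - x₀` in
`[0, d) ∪ (n - d, n)`. No two of them differ by exactly `n - d`, since that difference is an
edge when `2d ≤ n`, so folding `(n - d, n)` onto `(0, d)` maps `s` injectively into `[0, d)`.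
Hence the independence number is at most `d`, and a colouring with `k` colours has `n ≤ k d`.
-/

/-- The circular complete graph `K_{n/d}`: vertices `ℤ/n`, with `i ~ j` iff the cyclic
distance `|i-j|` satisfies `d ≤ |i-j| ≤ n-d` (stated symmetrically via both `(i-j).val`
and `(j-i).val`, which is equivalent). -/
def circGraph (n d : ℕ) : SimpleGraph (ZMod n) where
  Adj i j := i ≠ j ∧ (d ≤ (i - j).val ∧ (i - j).val ≤ n - d)
    ∧ (d ≤ (j - i).val ∧ (j - i).val ≤ n - d)
  symm := by
    constructor
    intro i j h
    exact ⟨h.1.symm, h.2.2, h.2.1⟩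
  loopless := by
    constructor
    intro i h
    exact h.1 rfl

open Finset

theorem Nat.sub_lt_of_div_eq_div {a b d : ℕ} (hd : 0 < d) (h : a / d = b / d) : a - b < d := by
  have ha := Nat.lt_mul_div_succ a hd
  have hb := Nat.mul_div_le b d
  rw [h, Nat.mul_succ] at ha
  omega

theorem SimpleGraph.Colorable.card_le_mul_indepNum {V : Type*} [Fintype V] {G : SimpleGraph V}
    {k : ℕ} (hG : G.Colorable k) : Fintype.card V ≤ k * G.indepNum := by
  classical
  obtain ⟨C⟩ := hG
  have hclass (c : Fin k) : #{v | C v = c} ≤ G.indepNum :=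
    IsIndepSet.card_le_indepNum fun v hv w hw _ ↦
      C.not_adj_of_mem_colorClass (c := c) (show C v = c by simpa using hv)
        (show C w = c by simpa using hw)
  calc Fintype.card V
      ≤ G.indepNum * #(univ : Finset (Fin k)) :=
        card_le_mul_card_image_of_maps_to (fun _ _ ↦ mem_univ _) _ fun c _ ↦ hclass c
    _ = k * G.indepNum := by rw [card_univ, Fintype.card_fin, mul_comm]

section circGraph

variable {n d : ℕ} [NeZero n]

theorem circGraph_adj_iff (hd : 1 ≤ d) {i j : ZMod n} :
    (circGraph n d).Adj i j ↔ d ≤ (j - i).val ∧ (j - i).val ≤ n - d := by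
  by_cases hij : j - i = 0
  · simp only [circGraph, hij, ZMod.val_zero]
    omega
  · have hneg : (i - j).val = n - (j - i).val := by
      rw [← neg_sub, ZMod.neg_val, if_neg hij]
    have hlt : (j - i).val < n := ZMod.val_lt _
    simp only [circGraph, hneg, ne_eq, eq_comm (a := i), ← sub_eq_zero (a := j), hij,
      not_false_eq_true, true_and]
    omega

theorem circGraph_colorable {k : ℕ} (hk : n ≤ k * d) : (circGraph n d).Colorable k := by
  have hd : 0 < d := Nat.pos_of_ne_zero fun h ↦ NeZero.ne n (by simpa [h] using hk)
  have hcolor (v : ZMod n) : v.val / d < k :=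
    Nat.div_lt_of_lt_mul (by linarith [ZMod.val_lt v, mul_comm k d])
  refine ⟨.mk (fun v ↦ ⟨v.val / d, hcolor v⟩) ?_⟩
  rintro v w ⟨-, ⟨hvw, -⟩, hwv, -⟩ hc
  have hc : v.val / d = w.val / d := congrArg Fin.val hc
  rcases le_total w.val v.val with h | h
  · rw [ZMod.val_sub h] at hvw
    exact (Nat.sub_lt_of_div_eq_div hd hc).not_ge hvw
  · rw [ZMod.val_sub h] at hwv
    exact (Nat.sub_lt_of_div_eq_div hd hc.symm).not_ge hwv

theorem circGraph_card_le_of_isIndepSet (hd : 1 ≤ d) (hn : 2 * d ≤ n) {s : Finset (ZMod n)}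
    (hs : (circGraph n d).IsIndepSet s) : #s ≤ d := by
  obtain rfl | ⟨x₀, hx₀⟩ := s.eq_empty_or_nonempty
  · simp
  have hwindow : ∀ y ∈ s, (y - x₀).val < d ∨ n - d < (y - x₀).val := by
    intro y hy
    by_cases hy₀ : y = x₀
    · simp only [hy₀, sub_self, ZMod.val_zero]
      omega
    · have hxy : ¬(circGraph n d).Adj x₀ y := hs hx₀ hy (Ne.symm hy₀)
      have := ZMod.val_lt (y - x₀)
      rw [circGraph_adj_iff hd] at hxy
      omega
  have hno_shift : ∀ y ∈ s, ∀ z ∈ s, (z - x₀).val ≠ (y - x₀).val + (n - d) := by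
    intro y hy z hz h
    have := ZMod.val_lt (z - x₀)
    have hyz : (z - y).val = n - d := by
      rw [← sub_sub_sub_cancel_right z y x₀, ZMod.val_sub (by omega)]
      omega
    refine hs hy hz ?_ ((circGraph_adj_iff hd).2 (by omega))
    rintro rfl
    simp only [sub_self, ZMod.val_zero] at hyz
    omega
  let fold (y : ZMod n) : ℕ :=
    if (y - x₀).val < d then (y - x₀).val else (y - x₀).val - (n - d)
  calc #s ≤ #(range d) := card_le_card_of_injOn fold ?_ ?_
    _ = d := card_range d
  · intro y hy
    have := hwindow y hy
    have := ZMod.val_lt (y - x₀)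
    simp only [fold, coe_range, Set.mem_Iio]
    split_ifs <;> omega
  · intro y hy z hz h
    have hoyz : (y - x₀).val = (z - x₀).val := by
      have := hno_shift y hy z hz
      have := hno_shift z hz y hy
      have := hwindow y hy
      have := hwindow z hz
      simp only [fold] at h
      split_ifs at h <;> omega
    exact sub_left_injective (ZMod.val_injective n hoyz)

theorem circGraph_indepNum_le (hd : 1 ≤ d) (hn : 2 * d ≤ n) : (circGraph n d).indepNum ≤ d := by
  obtain ⟨s, hs⟩ := (circGraph n d).exists_isNIndepSet_indepNum
  exact hs.card_eq ▸ circGraph_card_le_of_isIndepSet hd hn hs.isIndepSet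

end circGraph

/-- for `n ≥ 2d ≥ 2`, the chromatic number of the circular complete graph
`K_{n/d}` equals `⌈n/d⌉`. -/
theorem circGraph_chromaticNumber (n d : ℕ) [NeZero n] (hd : 1 ≤ d) (hn : 2 * d ≤ n) :
    (circGraph n d).chromaticNumber = ((⌈(n : ℚ) / (d : ℚ)⌉₊ : ℕ) : ℕ∞) := by
  have hd₀ : (0 : ℚ) < d := by exact_mod_cast hd
  apply le_antisymm
  · refine (circGraph_colorable ?_).chromaticNumber_le
    exact_mod_cast (div_le_iff₀ hd₀).1 (Nat.le_ceil ((n : ℚ) / d))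
  · refine SimpleGraph.le_chromaticNumber_iff_colorable.2 fun k hk ↦ ?_
    have hnk : n ≤ k * d := calc
      n = Fintype.card (ZMod n) := (ZMod.card n).symm
      _ ≤ k * (circGraph n d).indepNum := hk.card_le_mul_indepNum
      _ ≤ k * d := Nat.mul_le_mul_left k (circGraph_indepNum_le hd hn)
    exact Nat.cast_le.2 (Nat.ceil_le.2 ((div_le_iff₀ hd₀).2 (by exact_mod_cast hnk)))
end

section
/- If k/n = l/(l+1) with l ≥ 0 and n = (l+1)(n-k), then the set Δ = {0, 1, n-k, n-k+1, 2(n-k), 2(n-k)+1, ..., l(n-k), l(n-k)+1} ⊆ Z/n of size 2l+2 is a minimal non-face of N(n,k): Δ is not a face of N(n,k), but every proper subset of Δ is a face. -/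
/-- The discrete circular arc `[i, i+k]ₙ ⊆ ℤ/n`. -/
def cyclicArc (n k : ℕ) (i : ZMod n) : Finset (ZMod n) :=
  (Finset.range (k + 1)).image (fun j : ℕ => i + (j : ZMod n))

/-- `σ` is a face of the nerve complex `N(n,k)`: it is contained in some cyclic
interval `[i, i+k]ₙ`. -/
def IsFaceN (n k : ℕ) (σ : Finset (ZMod n)) : Prop :=
  ∃ i : ZMod n, σ ⊆ cyclicArc n k i


/-- The set `Δ = {0, 1, n-k, n-k+1, 2(n-k), 2(n-k)+1, …, l(n-k), l(n-k)+1} ⊆ ℤ/n`. -/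
def deltaSet (n k l : ℕ) : Finset (ZMod n) :=
  (Finset.range (l + 1)).biUnion
    (fun a => {((a * (n - k) : ℕ) : ZMod n), ((a * (n - k) : ℕ) : ZMod n) + 1})

/-!
Write `m = n - k`, so that `n = (l + 1) m` and `m ∣ n`. Reduction modulo `m` identifies `Δ` with
the set of `x ∈ ℤ/n` with `x ≡ 0` or `x ≡ 1 (mod m)`. The arc `[i, i + k]` misses exactly the
`m - 1` points `i - 1, …, i - (m - 1)`, whose residues are all residues except that of `i`; one of
them is therefore `0` or `1`, so `Δ` is not a face. Conversely, `Δ` minus a point `x ≡ 0` lies in the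
arc starting at `x + 1`, and `Δ` minus a point `x ≡ 1` in the arc starting at `x + m - 1`: in both
cases `x` is the only point of `Δ` among the missing ones.
-/

open Finset

section

variable {n k l m : ℕ}

theorem mem_cyclicArc_iff [NeZero n] {i x : ZMod n} :
    x ∈ cyclicArc n k i ↔ (x - i).val ≤ k := by
  simp only [cyclicArc, mem_image, mem_range]
  constructor
  · rintro ⟨j, hj, rfl⟩
    rw [add_sub_cancel_left, ZMod.val_natCast]
    exact (Nat.mod_le _ _).trans (by omega)
  · exact fun h => ⟨(x - i).val, by omega, by rw [ZMod.natCast_zmod_val, add_sub_cancel]⟩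

theorem notMem_cyclicArc_iff [NeZero n] (hk : k < n) {i x : ZMod n} :
    x ∉ cyclicArc n k i ↔ ∃ t : ℕ, 0 < t ∧ t < n - k ∧ x = i - t := by
  rw [mem_cyclicArc_iff, not_le]
  constructor
  · intro h
    have := ZMod.val_lt (x - i)
    refine ⟨n - (x - i).val, by omega, by omega, ?_⟩
    rw [Nat.cast_sub this.le, ZMod.natCast_self, ZMod.natCast_zmod_val]
    ring
  · rintro ⟨t, ht0, htk, rfl⟩
    have htn : (t : ZMod n).val = t := ZMod.val_natCast_of_lt (by omega)
    rw [sub_sub_cancel_left, ZMod.neg_val, if_neg (by rw [← ZMod.val_eq_zero, htn]; omega), htn]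
    omega

theorem IsFaceN.mono {σ τ : Finset (ZMod n)} (hσ : IsFaceN n k σ) (hτσ : τ ⊆ σ) :
    IsFaceN n k τ :=
  hσ.imp fun _ => hτσ.trans

theorem deltaSet_eq_image (hm : n - k = m) :
    deltaSet n k l = (range (l + 1) ×ˢ range 2).image fun p => ((p.1 * m + p.2 : ℕ) : ZMod n) := by
  ext x
  simp [deltaSet, hm, eq_comm, Nat.le_one_iff_eq_zero_or_eq_one, and_or_left, or_and_right,
    exists_or]

theorem card_deltaSet (hm : n - k = m) (hn : n = (l + 1) * m) (hm2 : 2 ≤ m) :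
    (deltaSet n k l).card = 2 * l + 2 := by
  have hlt : ∀ p ∈ range (l + 1) ×ˢ range 2, p.1 * m + p.2 < n := by
    intro p hp
    simp only [mem_product, mem_range] at hp
    have := Nat.mul_le_mul_right m (Nat.le_of_lt_succ hp.1)
    rw [hn, add_mul, one_mul]
    omega
  have hdivmod : ∀ a r, r < 2 → (a * m + r) / m = a ∧ (a * m + r) % m = r :=
    fun a r hr => Nat.div_mod_unique (by omega) |>.2 ⟨by ring, by omega⟩
  rw [deltaSet_eq_image hm, card_image_of_injOn, card_product, card_range, card_range]
  · ring
  intro p hp q hq hpq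
  have hval := (ZMod.natCast_eq_natCast_iff' _ _ _).1 hpq
  rw [Nat.mod_eq_of_lt (hlt p hp), Nat.mod_eq_of_lt (hlt q hq)] at hval
  simp only [coe_product, coe_range, Set.mem_prod, Set.mem_Iio] at hp hq
  obtain ⟨hp1, hp2⟩ := hdivmod p.1 p.2 hp.2
  obtain ⟨hq1, hq2⟩ := hdivmod q.1 q.2 hq.2
  rw [hval] at hp1 hp2
  exact Prod.ext (hp1.symm.trans hq1) (hp2.symm.trans hq2)

theorem mem_deltaSet_iff [NeZero n] (hm : n - k = m) (hn : n = (l + 1) * m)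
    (φ : ZMod n →+* ZMod m) {x : ZMod n} : x ∈ deltaSet n k l ↔ φ x = 0 ∨ φ x = 1 := by
  rw [deltaSet_eq_image hm]
  constructor
  · simp only [mem_image, mem_product, mem_range]
    rintro ⟨⟨a, r⟩, ⟨-, hr⟩, rfl⟩
    interval_cases r <;> simp
  · intro h
    have hφx : φ x = (x.val : ZMod m) := by rw [← map_natCast φ, ZMod.natCast_zmod_val]
    have hr : x.val % m < 2 := by
      have : (φ x).val ≤ 1 := by
        rcases h with h | h <;> rw [h]
        · simp
        · exact (ZMod.val_one_eq_one_mod m).trans_le (Nat.mod_le 1 m)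
      rw [hφx, ZMod.val_natCast] at this
      omega
    have hq : x.val / m < l + 1 := by
      rw [Nat.div_lt_iff_lt_mul (Nat.pos_of_mul_pos_left (hn ▸ NeZero.pos n)), ← hn]
      exact ZMod.val_lt x
    refine mem_image.2 ⟨(x.val / m, x.val % m), by simp [hq, hr], ?_⟩
    dsimp only
    rw [Nat.div_add_mod', ZMod.natCast_zmod_val]

theorem not_isFaceN_deltaSet [NeZero n] (hm : n - k = m) (hn : n = (l + 1) * m)
    (hm2 : 2 ≤ m) : ¬ IsFaceN n k (deltaSet n k l) := by
  rintro ⟨i, hsub⟩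
  have : NeZero m := ⟨by omega⟩
  let φ := ZMod.castHom (Dvd.intro_left _ hn.symm) (ZMod m)
  obtain ⟨c, hc, hci⟩ : ∃ c : ZMod m, (c = 0 ∨ c = 1) ∧ c ≠ φ i := by
    have : Fact (1 < m) := ⟨by omega⟩
    by_cases h : φ i = 0
    · exact ⟨1, Or.inr rfl, h ▸ one_ne_zero⟩
    · exact ⟨0, Or.inl rfl, Ne.symm h⟩
  set t := (φ i - c).val
  have hy : i - t ∈ deltaSet n k l := by
    rw [mem_deltaSet_iff hm hn φ, map_sub, map_natCast, ZMod.natCast_zmod_val, sub_sub_cancel]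
    exact hc
  refine (notMem_cyclicArc_iff (by omega)).2 ⟨t, ?_, ?_, rfl⟩ (hsub hy)
  · exact ZMod.val_pos.2 (sub_ne_zero.2 hci.symm)
  · exact hm ▸ ZMod.val_lt _

theorem isFaceN_deltaSet_erase [NeZero n] (hm : n - k = m) (hn : n = (l + 1) * m)
    {x : ZMod n} (hx : x ∈ deltaSet n k l) : IsFaceN n k ((deltaSet n k l).erase x) := by
  let φ := ZMod.castHom (Dvd.intro_left _ hn.symm) (ZMod m)
  have hk : k < n := by have := Nat.pos_of_mul_pos_left (hn ▸ NeZero.pos n); omega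
  have hinj : ∀ s t : ℕ, s < m → t < m → (s : ZMod m) = t → s = t := fun s t hs ht h => by
    rw [← ZMod.val_natCast_of_lt hs, h, ZMod.val_natCast_of_lt ht]
  have key : ∀ i : ZMod n, (∀ t : ℕ, 0 < t → t < m → (φ i - t = 0 ∨ φ i - t = 1) → i - t = x) →
      IsFaceN n k ((deltaSet n k l).erase x) := by
    refine fun i hi => ⟨i, fun y hy => ?_⟩
    obtain ⟨hyx, hyΔ⟩ := mem_erase.1 hy
    by_contra hout
    obtain ⟨t, ht0, htm, rfl⟩ := (notMem_cyclicArc_iff hk).1 hout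
    rw [mem_deltaSet_iff hm hn φ, map_sub, map_natCast] at hyΔ
    exact hyx (hi t ht0 (hm ▸ htm) hyΔ)
  rcases (mem_deltaSet_iff hm hn φ).1 hx with hx0 | hx1
  · refine key (x + 1) fun t ht0 htm h => ?_
    simp only [map_add, map_one, hx0, zero_add] at h
    rcases h with h | h
    · obtain rfl : t = 1 := hinj t 1 htm (by omega) (by push_cast; linear_combination -h)
      simp
    · exact absurd (hinj t 0 htm (by omega) (by push_cast; linear_combination -h)) ht0.ne'
  · refine key (x + m - 1) fun t ht0 htm h => ?_
    simp only [map_sub, map_add, map_one, map_natCast, hx1, ZMod.natCast_self] at h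
    rcases h with h | h
    · exact absurd (hinj t 0 htm (by omega) (by push_cast; linear_combination -h)) ht0.ne'
    · obtain rfl : t = m - 1 := hinj t (m - 1) htm (by omega)
        (by rw [Nat.cast_sub (by omega), ZMod.natCast_self]; linear_combination -h)
      rw [Nat.cast_sub (by omega)]
      ring

end

theorem deltaSet_minimal_nonface_general (n k l : ℕ)
    (hn : n = (l + 1) * (n - k)) (hk : k + 2 ≤ n) :
    (deltaSet n k l).card = 2 * l + 2 ∧
    ¬ IsFaceN n k (deltaSet n k l) ∧
    ∀ τ : Finset (ZMod n), τ ⊂ deltaSet n k l → IsFaceN n k τ := by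
  have : NeZero n := ⟨by omega⟩
  obtain ⟨m, hm⟩ : ∃ m, n - k = m := ⟨_, rfl⟩
  rw [hm] at hn
  refine ⟨card_deltaSet hm hn (by omega), not_isFaceN_deltaSet hm hn (by omega), fun τ hτ => ?_⟩
  obtain ⟨x, hx, hτx⟩ := ssubset_iff_exists_subset_erase.1 hτ
  exact (isFaceN_deltaSet_erase hm hn hx).mono hτx

/-- if `k/n = l/(l+1)` (so `n = (l+1)(n-k)`), with `k ≤ n-2`, then `Δ` has
size `2l+2` and is a minimal non-face of `N(n,k)`: `Δ` is not a face, but every proper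
subset of `Δ` is a face. -/
theorem deltaSet_minimal_nonface (n k l : ℕ) [NeZero n]
    (hfrac : k * (l + 1) = l * n) (hn : n = (l + 1) * (n - k)) (hk : k + 2 ≤ n) :
    (deltaSet n k l).card = 2 * l + 2 ∧
    ¬ IsFaceN n k (deltaSet n k l) ∧
    ∀ τ : Finset (ZMod n), τ ⊂ deltaSet n k l → IsFaceN n k τ :=
  deltaSet_minimal_nonface_general n k l hn hk
end
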